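/- Let 𝓜 ∈ M_ℍ(n,n) be hyperhermitian, and suppose 𝓔 ∈ U_ℍ(n) and real numbers ν₀,…,ν_{n−1} satisfy 𝓔*𝓜𝓔 = diag(ν₀,…,ν_{n−1}). Let ω_𝓜 = Σ_{A,B=0}^{2n−1} [τ(𝓜)J]_{AB} ω^A∧ω^B ∈ Λ²ℂ^{2n}. Then the n-fold exterior power satisfies ω_𝓜∧⋯∧ω_𝓜 = 2ⁿ·n!·(ν₀⋯ν_{n−1})·Ω_{2n}. (The number ν₀⋯ν_{n−1} equals the Moore determinant of 𝓜.) -/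

import Mathlib

open scoped Quaternion
open Matrix Sum

noncomputable section

/-- The complex part `a` in the decomposition `q = a + b·j` of a quaternion. -/
def qa (q : ℍ[ℝ]) : ℂ := ⟨q.re, q.imI⟩

/-- The complex part `b` in the decomposition `q = a + b·j` of a quaternion. -/
def qb (q : ℍ[ℝ]) : ℂ := ⟨q.imJ, q.imK⟩

/-- Entrywise complex conjugation of a complex matrix. -/
def conjM {m k : Type*} (M : Matrix m k ℂ) : Matrix m k ℂ := M.map (starRingEnd ℂ)

/-- The embedding τ : M_ℍ(p,m) → M_ℂ(2p,2m), τ(a + b·j) = [[a, −b],[conj b, conj a]]. -/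
def tau {p m : ℕ} (M : Matrix (Fin p) (Fin m) ℍ[ℝ]) :
    Matrix (Fin p ⊕ Fin p) (Fin m ⊕ Fin m) ℂ :=
  Matrix.fromBlocks (M.map qa) (-(M.map qb)) (conjM (M.map qb)) (conjM (M.map qa))

/-- The standard symplectic matrix J = [[0, Iₙ],[−Iₙ, 0]]. -/
def Jmat (n : ℕ) : Matrix (Fin n ⊕ Fin n) (Fin n ⊕ Fin n) ℂ :=
  Matrix.fromBlocks 0 1 (-1) 0

/-- index set {0,…,2n−1}, as two blocks. -/
abbrev Idx (n : ℕ) := Fin n ⊕ Fin n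

/-- ℂ^{2n}. -/
abbrev Vc (n : ℕ) := Idx n → ℂ

/-- The exterior algebra of ℂ^{2n}. -/
abbrev EA (n : ℕ) := ExteriorAlgebra ℂ (Vc n)

/-- Basis 1-vectors ω^A of the exterior algebra. -/
def ω {n : ℕ} (A : Idx n) : EA n := ExteriorAlgebra.ι ℂ (Pi.single A 1)

/-- Ω_{2n} = ω⁰∧ω^n∧ω¹∧ω^{n+1}∧…∧ω^{n−1}∧ω^{2n−1}. -/
def Ωn (n : ℕ) : EA n := (List.ofFn fun l : Fin n => ω (inl l) * ω (inr l)).prod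

/-- β_n = Σ_l ω^l∧ω^{n+l}. -/
def βn (n : ℕ) : EA n := ∑ l : Fin n, ω (inl l) * ω (inr l)

/-- Induced action of a 2n×2n complex matrix on the exterior algebra,
determined by N.ω^A = Σ_B N_{AB} ω^B. -/
def actE {n : ℕ} (N : Matrix (Idx n) (Idx n) ℂ) : EA n →ₐ[ℂ] EA n :=
  ExteriorAlgebra.map (Matrix.mulVecLin Nᵀ)

/-- ℝ^{4n}. -/
abbrev V4 (n : ℕ) := Fin (4 * n) → ℝ

/-- The coordinate index 4l+β. -/
def X {n : ℕ} (l : Fin n) (β : Fin 4) : Fin (4 * n) :=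
  ⟨4 * l.val + β.val, by have h1 := l.isLt; have h2 := β.isLt; omega⟩

/-- Partial derivative of a complex-valued function on ℝ^{4n}. -/
def pd {n : ℕ} (a : Fin (4 * n)) (f : V4 n → ℂ) : V4 n → ℂ :=
  fun q => fderiv ℝ f q (Pi.single a 1)

/-- The operators ∇_{Aα}, α = 0' (α=0) or 1' (α=1). -/
def nabla {n : ℕ} (A : Idx n) (α : Fin 2) (f : V4 n → ℂ) : V4 n → ℂ :=
  fun q =>
    match A with
    | Sum.inl l =>
        if α = 0 then pd (X l 0) f q + Complex.I * pd (X l 1) f q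
        else -pd (X l 2) f q - Complex.I * pd (X l 3) f q
    | Sum.inr l =>
        if α = 0 then pd (X l 2) f q - Complex.I * pd (X l 3) f q
        else pd (X l 0) f q - Complex.I * pd (X l 1) f q

/-- ∇_{Aα} applied to a real-valued function. -/
def nablaR {n : ℕ} (A : Idx n) (α : Fin 2) (u : V4 n → ℝ) : V4 n → ℂ :=
  nabla A α (fun x => ((u x : ℝ) : ℂ))

/-- Δ_{AB}u = ½(∇_{A0'}∇_{B1'}u − ∇_{B0'}∇_{A1'}u). -/
def Delta {n : ℕ} (A B : Idx n) (u : V4 n → ℝ) : V4 n → ℂ :=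
  fun q => (1 / 2 : ℂ) *
    (nabla A 0 (nabla B 1 (fun x => ((u x : ℝ) : ℂ))) q
      - nabla B 0 (nabla A 1 (fun x => ((u x : ℝ) : ℂ))) q)

/-- The Baston operator Δu = Σ_{A,B} Δ_{AB}u · ω^A∧ω^B. -/
def Baston {n : ℕ} (u : V4 n → ℝ) (q : V4 n) : EA n :=
  ∑ A : Idx n, ∑ B : Idx n, Delta A B u q • (ω A * ω B)

/-- The quaternion units. -/
def iH : ℍ[ℝ] := ⟨0, 1, 0, 0⟩
def jH : ℍ[ℝ] := ⟨0, 0, 1, 0⟩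
def kH : ℍ[ℝ] := ⟨0, 0, 0, 1⟩

/-- Partial derivative of a quaternion-valued function on ℝ^{4n}. -/
def pdH {n : ℕ} (a : Fin (4 * n)) (f : V4 n → ℍ[ℝ]) : V4 n → ℍ[ℝ] :=
  fun q => fderiv ℝ f q (Pi.single a 1)

/-- Partial derivative of a real-valued function on ℝ^{4n}. -/
def pdR {n : ℕ} (a : Fin (4 * n)) (f : V4 n → ℝ) : V4 n → ℝ :=
  fun q => fderiv ℝ f q (Pi.single a 1)

/-- ∂u/∂q_k = (∂_{x_{4k}} − i∂_{x_{4k+1}} − j∂_{x_{4k+2}} − k∂_{x_{4k+3}})u for real u. -/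
def dq {n : ℕ} (k : Fin n) (u : V4 n → ℝ) : V4 n → ℍ[ℝ] :=
  fun q => ⟨pdR (X k 0) u q, -pdR (X k 1) u q, -pdR (X k 2) u q, -pdR (X k 3) u q⟩

/-- ∂/∂q̄_l = ∂_{x_{4l}} + i∂_{x_{4l+1}} + j∂_{x_{4l+2}} + k∂_{x_{4l+3}} on ℍ-valued functions. -/
def dqbar {n : ℕ} (l : Fin n) (f : V4 n → ℍ[ℝ]) : V4 n → ℍ[ℝ] :=
  fun q => pdH (X l 0) f q + iH * pdH (X l 1) f q + jH * pdH (X l 2) f q + kH * pdH (X l 3) f q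

/-- The quaternionic Hessian of a real function u. -/
def Hess {n : ℕ} (u : V4 n → ℝ) (q : V4 n) : Matrix (Fin n) (Fin n) ℍ[ℝ] :=
  Matrix.of fun l k => dqbar l (dq k u) q

/-- ω^I = ω^{i₁}∧…∧ω^{i_p} for a multi-index I. -/
def ωProd {n p : ℕ} (I : Fin p → Idx n) : EA n :=
  (List.ofFn fun j => ω (I j)).prod

/-- The Λ^pℂ^{2n}-valued function with coefficient functions f: F = Σ_I f_I ω^I. -/
def formVal {n p : ℕ} (f : (Fin p → Idx n) → V4 n → ℂ) (q : V4 n) : EA n :=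
  ∑ I : Fin p → Idx n, f I q • ωProd I

/-- Coefficients of d_α F for F with coefficients f:
d_αF = Σ_{A,I} ∇_{Aα}f_I · ω^A∧ω^I. -/
def dcoef {n p : ℕ} (α : Fin 2) (f : (Fin p → Idx n) → V4 n → ℂ) :
    (Fin (p + 1) → Idx n) → V4 n → ℂ :=
  fun J => nabla (J 0) α (f (Fin.tail J))

/-- Coefficients of the wedge product F∧G. -/
def wedgeCoef {n p q : ℕ} (f : (Fin p → Idx n) → V4 n → ℂ)
    (g : (Fin q → Idx n) → V4 n → ℂ) : (Fin (p + q) → Idx n) → V4 n → ℂ :=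
  fun J x => f (fun i => J (Fin.castAdd q i)) x * g (fun i => J (Fin.natAdd p i)) x

/-- The complex coordinate functions z^{Aα}. -/
def zc {n : ℕ} (A : Idx n) (α : Fin 2) : V4 n → ℂ :=
  fun x =>
    match A with
    | Sum.inl l => if α = 0 then ⟨x (X l 0), -x (X l 1)⟩ else ⟨-x (X l 2), x (X l 3)⟩
    | Sum.inr l => if α = 0 then ⟨x (X l 2), x (X l 3)⟩ else ⟨x (X l 0), x (X l 1)⟩

/-- The quaternionic vector associated to a point of ℝ^{4n}. -/
def quatv {n : ℕ} (v : V4 n) : Fin n → ℍ[ℝ] :=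
  fun l => ⟨v (X l 0), v (X l 1), v (X l 2), v (X l 3)⟩

/-- The four real components of a quaternion. -/
def comp4 (q : ℍ[ℝ]) : Fin 4 → ℝ := ![q.re, q.imI, q.imJ, q.imK]

/-- The real-linear action of a quaternionic matrix 𝓤 on ℝ^{4n} ≅ ℍⁿ, q ↦ 𝓤q. -/
def act {n : ℕ} (U : Matrix (Fin n) (Fin n) ℍ[ℝ]) (v : V4 n) : V4 n :=
  fun a => comp4 ((U *ᵥ quatv v) ⟨a.val / 4, by have := a.isLt; omega⟩)
    ⟨a.val % 4, by omega⟩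

/-! Write `ω_S = Σ_{A,B} S_{AB} ω^A∧ω^B` (`twoForm S`), so that `ω_𝓜 = ω_{τ(𝓜)J}`. Since `τ` is
multiplicative and `τ(𝓔*) J = J τ(𝓔)ᵀ`, writing `𝓜 = 𝓔 D 𝓔*` with `D = diag(ν)` gives
`τ(𝓜) J = N (τ(D) J) Nᵀ` for `N = τ(𝓔)`, so `ω_𝓜` is the image of
`ω_{τ(D)J} = Σ_l 2ν_l ω^l∧ω^{n+l}` under the algebra endomorphism of `Λℂ^{2n}` induced by `N`.
These summands commute and square to zero, hence `ω_{τ(D)J}^n = n! ∏_l 2ν_l · Ω_{2n}`. Finally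
`𝓔𝓔* = 1` gives `N J Nᵀ = J`, so the endomorphism fixes `ω_J` and hence `Ω_{2n}`, a nonzero
multiple of `ω_J^n`. -/

lemma qa_add (p q : ℍ[ℝ]) : qa (p + q) = qa p + qa q := rfl

lemma qb_add (p q : ℍ[ℝ]) : qb (p + q) = qb p + qb q := rfl

lemma qa_mul (p q : ℍ[ℝ]) : qa (p * q) = qa p * qa q - qb p * starRingEnd ℂ (qb q) := by
  apply Complex.ext <;> simp [qa, qb] <;> ring

lemma qb_mul (p q : ℍ[ℝ]) : qb (p * q) = qa p * qb q + qb p * starRingEnd ℂ (qa q) := by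
  apply Complex.ext <;> simp [qa, qb] <;> ring

lemma qa_star (q : ℍ[ℝ]) : qa (star q) = starRingEnd ℂ (qa q) := by
  apply Complex.ext <;> simp [qa]

lemma qb_star (q : ℍ[ℝ]) : qb (star q) = -qb q := by
  apply Complex.ext <;> simp [qb]

section ComplexParts

variable {l m k : Type*} [Fintype m]

lemma map_qa_mul (P : Matrix l m ℍ[ℝ]) (Q : Matrix m k ℍ[ℝ]) :
    (P * Q).map qa = P.map qa * Q.map qa - P.map qb * conjM (Q.map qb) := by
  ext i j
  simp only [map_apply, mul_apply, Matrix.sub_apply, conjM, ← Finset.sum_sub_distrib, ← qa_mul]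
  exact map_sum (AddMonoidHom.mk' qa qa_add) _ _

lemma map_qb_mul (P : Matrix l m ℍ[ℝ]) (Q : Matrix m k ℍ[ℝ]) :
    (P * Q).map qb = P.map qa * Q.map qb + P.map qb * conjM (Q.map qa) := by
  ext i j
  simp only [map_apply, mul_apply, Matrix.add_apply, conjM, ← Finset.sum_add_distrib, ← qb_mul]
  exact map_sum (AddMonoidHom.mk' qb qb_add) _ _

end ComplexParts

section ConjM

variable {l m k : Type*}

lemma conjM_mul [Fintype m] (P : Matrix l m ℂ) (Q : Matrix m k ℂ) :
    conjM (P * Q) = conjM P * conjM Q :=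
  Matrix.map_mul

lemma conjM_add (P Q : Matrix l m ℂ) : conjM (P + Q) = conjM P + conjM Q :=
  Matrix.map_add _ (map_add _) P Q

lemma conjM_sub (P Q : Matrix l m ℂ) : conjM (P - Q) = conjM P - conjM Q :=
  Matrix.map_sub _ (map_sub _) P Q

lemma conjM_neg (P : Matrix l m ℂ) : conjM (-P) = -conjM P :=
  Matrix.map_neg _ (map_neg _) P

@[simp] lemma conjM_conjM (P : Matrix l m ℂ) : conjM (conjM P) = P := by
  ext i j; simp [conjM]

lemma conjM_transpose (P : Matrix l m ℂ) : conjM Pᵀ = (conjM P)ᵀ := rfl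

end ConjM

lemma tau_mul {p m k : ℕ} (P : Matrix (Fin p) (Fin m) ℍ[ℝ]) (Q : Matrix (Fin m) (Fin k) ℍ[ℝ]) :
    tau (P * Q) = tau P * tau Q := by
  simp only [tau, fromBlocks_multiply, map_qa_mul, map_qb_mul, conjM_add, conjM_sub, conjM_mul,
    conjM_conjM, Matrix.neg_mul, Matrix.mul_neg]
  congr 1 <;> abel

lemma tau_diagonal_ofReal {p : ℕ} (d : Fin p → ℝ) :
    tau (diagonal fun i => (d i : ℍ[ℝ])) =
      fromBlocks (diagonal fun i => (d i : ℂ)) 0 0 (diagonal fun i => (d i : ℂ)) := by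
  have hqa : (diagonal fun i => (d i : ℍ[ℝ])).map qa = diagonal fun i => (d i : ℂ) := by
    ext i j; by_cases h : i = j <;> simp [h, qa, Complex.ext_iff]
  have hqb : (diagonal fun i => (d i : ℍ[ℝ])).map qb = 0 := by
    ext i j; by_cases h : i = j <;> simp [h, qb, Complex.ext_iff]
  have hconj : conjM (diagonal fun i => (d i : ℂ)) = diagonal fun i => (d i : ℂ) := by
    ext i j; by_cases h : i = j <;> simp [conjM, h]
  rw [tau, hqa, hqb, hconj, neg_zero, conjM, Matrix.map_zero _ (map_zero _)]

lemma tau_one {p : ℕ} : tau (1 : Matrix (Fin p) (Fin p) ℍ[ℝ]) = 1 := by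
  simpa using tau_diagonal_ofReal (fun _ : Fin p => 1)

lemma tau_conjTranspose_mul_Jmat {p : ℕ} (M : Matrix (Fin p) (Fin p) ℍ[ℝ]) :
    tau Mᴴ * Jmat p = Jmat p * (tau M)ᵀ := by
  have hqa : Mᴴ.map qa = (conjM (M.map qa))ᵀ := by ext i j; exact qa_star _
  have hqb : Mᴴ.map qb = -(M.map qb)ᵀ := by ext i j; exact qb_star _
  simp only [tau, Jmat, hqa, hqb, fromBlocks_transpose, fromBlocks_multiply, conjM_neg,
    conjM_transpose, conjM_conjM, Matrix.mul_zero, Matrix.zero_mul, Matrix.mul_one,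
    Matrix.one_mul, Matrix.mul_neg, Matrix.neg_mul, zero_add, add_zero, neg_neg,
    Matrix.transpose_neg, neg_zero]

lemma tau_diagonal_ofReal_mul_Jmat {p : ℕ} (d : Fin p → ℝ) :
    tau (diagonal fun i => (d i : ℍ[ℝ])) * Jmat p =
      fromBlocks 0 (diagonal fun i => (d i : ℂ)) (-diagonal fun i => (d i : ℂ)) 0 := by
  rw [tau_diagonal_ofReal, Jmat, fromBlocks_multiply]
  simp

section Anticommute

variable {R M : Type*} [CommRing R] [AddCommGroup M] [Module R M]

open ExteriorAlgebra

lemma ExteriorAlgebra.ι_mul_ι_anticomm (x y : M) : ι R x * ι R y = -(ι R y * ι R x) :=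
  eq_neg_of_add_eq_zero_left (ι_add_mul_swap x y)

lemma ExteriorAlgebra.ι_commute_ι_mul_ι (x y z : M) : Commute (ι R x) (ι R y * ι R z) := by
  rw [Commute, SemiconjBy, ← mul_assoc, ι_mul_ι_anticomm x, neg_mul, mul_assoc,
    ι_mul_ι_anticomm x, mul_neg, neg_neg, mul_assoc]

lemma ExteriorAlgebra.ι_mul_ι_commute (x y z w : M) :
    Commute (ι R x * ι R y) (ι R z * ι R w) :=
  (ι_commute_ι_mul_ι x z w).mul_left (ι_commute_ι_mul_ι y z w)

lemma ExteriorAlgebra.ι_mul_ι_mul_self (x y : M) : ι R x * ι R y * (ι R x * ι R y) = 0 := by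
  rw [mul_assoc, (ι_commute_ι_mul_ι y x y).eq, mul_assoc, ι_sq_zero, mul_zero, mul_zero]

end Anticommute

def twoForm {n : ℕ} (S : Matrix (Idx n) (Idx n) ℂ) : EA n :=
  ∑ A, ∑ B, S A B • (ω A * ω B)

lemma actE_ω {n : ℕ} (N : Matrix (Idx n) (Idx n) ℂ) (A : Idx n) :
    actE N (ω A) = ∑ B, N A B • ω B := by
  simp only [actE, ω, ExteriorAlgebra.map_apply_ι, ← map_smul, ← map_sum]
  congr 1
  ext C
  simp [Pi.single_apply]

lemma actE_ω_mul_ω {n : ℕ} (N : Matrix (Idx n) (Idx n) ℂ) (C D : Idx n) :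
    actE N (ω C * ω D) = ∑ A, ∑ B, (N C A * N D B) • (ω A * ω B) := by
  simp only [map_mul, actE_ω, Finset.sum_mul_sum, smul_mul_smul_comm]

lemma twoForm_transpose_mul_mul {n : ℕ} (N S : Matrix (Idx n) (Idx n) ℂ) :
    twoForm (Nᵀ * S * N) = ∑ C, ∑ D, ∑ A, ∑ B, (S C D * (N C A * N D B)) • (ω A * ω B) := by
  simp only [twoForm, mul_apply, transpose_apply, Finset.sum_mul, Finset.sum_smul,
    ← Fintype.sum_prod_type']
  refine Fintype.sum_equiv ⟨fun x => (x.2.2.2, x.2.2.1, x.1, x.2.1),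
    fun y => (y.2.2.1, y.2.2.2, y.2.1, y.1), fun _ => rfl, fun _ => rfl⟩ _ _ fun x => ?_
  rw [Equiv.coe_fn_mk, mul_comm (N _ _), mul_assoc]

lemma actE_twoForm {n : ℕ} (N S : Matrix (Idx n) (Idx n) ℂ) :
    actE N (twoForm S) = twoForm (Nᵀ * S * N) := by
  rw [twoForm_transpose_mul_mul]
  simp only [twoForm, map_sum, map_smul, actE_ω_mul_ω, Finset.smul_sum, smul_smul]

lemma twoForm_fromBlocks_diagonal {n : ℕ} (d : Fin n → ℂ) :
    twoForm (fromBlocks 0 (diagonal d) (-diagonal d) 0) =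
      ∑ l, (2 * d l) • (ω (inl l) * ω (inr l)) := by
  have hswap : ∀ k l : Fin n, ω (inr k) * ω (inl l) = -(ω (inl l) * ω (inr k)) := fun k l =>
    ExteriorAlgebra.ι_mul_ι_anticomm _ _
  rw [twoForm, Fintype.sum_sum_type, ← Finset.sum_add_distrib]
  refine Finset.sum_congr rfl fun l _ => ?_
  simp [Fintype.sum_sum_type, diagonal_apply, hswap, two_mul, add_smul]

section SquareZero

variable {R : Type*} [Semiring R]

lemma Commute.add_pow_succ_of_mul_self_eq_zero {a b : R} (h : Commute a b) (ha : a * a = 0)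
    (k : ℕ) : (a + b) ^ (k + 1) = b ^ (k + 1) + (k + 1) • (a * b ^ k) := by
  have hvanish : ∀ i ∈ Finset.range k, a ^ (i + 2) * b ^ (k + 1 - (i + 2)) *
      ((k + 1).choose (i + 2) : R) = 0 := fun i _ => by
    rw [pow_add, sq, ha, mul_zero, zero_mul, zero_mul]
  rw [h.add_pow, Finset.sum_range_succ', Finset.sum_range_succ', Finset.sum_eq_zero hvanish]
  simp only [pow_zero, pow_one, zero_add, Nat.choose_zero_right, Nat.choose_one_right,
    Nat.cast_one, one_mul, mul_one, Nat.add_sub_cancel, Nat.sub_zero, nsmul_eq_mul,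
    (Nat.cast_commute (k + 1) _).eq, add_comm]

variable {m : ℕ} {x : Fin m → R}

lemma sum_pow_succ_eq_zero_of_mul_self_eq_zero (hc : ∀ i j, Commute (x i) (x j))
    (hx : ∀ i, x i * x i = 0) : (∑ i, x i) ^ (m + 1) = 0 := by
  induction m with
  | zero => simp
  | succ m ih =>
    have hs : (∑ i : Fin m, x i.succ) ^ (m + 1) = 0 :=
      ih (fun i j => hc i.succ j.succ) fun i => hx i.succ
    rw [Fin.sum_univ_succ, (Commute.sum_right _ _ _ fun i _ => hc 0 i.succ)
      |>.add_pow_succ_of_mul_self_eq_zero (hx 0), pow_succ', hs, mul_zero, zero_add, mul_zero,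
      smul_zero]

lemma sum_pow_eq_factorial_smul_prod_of_mul_self_eq_zero (hc : ∀ i j, Commute (x i) (x j))
    (hx : ∀ i, x i * x i = 0) : (∑ i, x i) ^ m = m.factorial • (List.ofFn x).prod := by
  induction m with
  | zero => simp
  | succ m ih =>
    have hc' : ∀ i j : Fin m, Commute (x i.succ) (x j.succ) := fun i j => hc i.succ j.succ
    have hx' : ∀ i : Fin m, x i.succ * x i.succ = 0 := fun i => hx i.succ
    rw [Fin.sum_univ_succ, (Commute.sum_right _ _ _ fun i _ => hc 0 i.succ)
      |>.add_pow_succ_of_mul_self_eq_zero (hx 0), sum_pow_succ_eq_zero_of_mul_self_eq_zero hc' hx',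
      ih hc' hx', List.ofFn_succ, List.prod_cons, mul_smul_comm, smul_smul, Nat.factorial_succ,
      zero_add]

end SquareZero

lemma List.prod_ofFn_smul {R A : Type*} [CommSemiring R] [Semiring A] [Algebra R A] {m : ℕ}
    (c : Fin m → R) (x : Fin m → A) :
    (List.ofFn fun i => c i • x i).prod = (∏ i, c i) • (List.ofFn x).prod := by
  induction m with
  | zero => simp
  | succ m ih => rw [List.ofFn_succ, List.ofFn_succ, List.prod_cons, List.prod_cons, ih,
      Fin.prod_univ_succ, smul_mul_smul_comm]

lemma sum_smul_ω_mul_ω_pow {n : ℕ} (c : Fin n → ℂ) :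
    (∑ l, c l • (ω (inl l) * ω (inr l))) ^ n = (n.factorial * ∏ l, c l : ℂ) • Ωn n := by
  rw [sum_pow_eq_factorial_smul_prod_of_mul_self_eq_zero, List.prod_ofFn_smul, ← Ωn,
    ← Nat.cast_smul_eq_nsmul ℂ, smul_smul]
  · exact fun i j => ((ExteriorAlgebra.ι_mul_ι_commute _ _ _ _).smul_left _).smul_right _
  · intro i
    simp only [smul_mul_smul_comm, ω, ExteriorAlgebra.ι_mul_ι_mul_self, smul_zero]

lemma twoForm_Jmat_pow (n : ℕ) : twoForm (Jmat n) ^ n = (n.factorial * 2 ^ n : ℂ) • Ωn n := by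
  rw [Jmat, ← diagonal_one, twoForm_fromBlocks_diagonal, sum_smul_ω_mul_ω_pow]
  simp

lemma actE_Ωn_of_transpose_mul_Jmat_mul {n : ℕ} (N : Matrix (Idx n) (Idx n) ℂ)
    (hN : Nᵀ * Jmat n * N = Jmat n) : actE N (Ωn n) = Ωn n := by
  have h := congrArg (actE N) (twoForm_Jmat_pow n)
  rw [map_pow, actE_twoForm, hN, twoForm_Jmat_pow, map_smul] at h
  exact smul_right_injective (EA n) (by simp [Nat.factorial_ne_zero]) h.symm

lemma tau_mul_Jmat_mul_transpose_of_mul_conjTranspose_eq_one {n : ℕ}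
    {E : Matrix (Fin n) (Fin n) ℍ[ℝ]} (hE : E * Eᴴ = 1) :
    tau E * Jmat n * (tau E)ᵀ = Jmat n := by
  rw [Matrix.mul_assoc, ← tau_conjTranspose_mul_Jmat, ← Matrix.mul_assoc, ← tau_mul, hE, tau_one,
    Matrix.one_mul]

theorem stmt_9_general {n : ℕ} (M : Matrix (Fin n) (Fin n) ℍ[ℝ])
    (E : Matrix (Fin n) (Fin n) ℍ[ℝ]) (hE2 : E * Eᴴ = 1)
    (ν : Fin n → ℝ)
    (hdiag : Eᴴ * M * E = Matrix.diagonal (fun i => ((ν i : ℝ) : ℍ[ℝ]))) :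
    (∑ A : Idx n, ∑ B : Idx n, (tau M * Jmat n) A B • (ω A * ω B)) ^ n =
      (((2 : ℂ) ^ n * (n.factorial : ℂ)) * (((∏ i, ν i : ℝ) : ℝ) : ℂ)) • Ωn n := by
  have hM : M = E * diagonal (fun i => (ν i : ℍ[ℝ])) * Eᴴ := by
    rw [← hdiag, ← Matrix.mul_assoc, ← Matrix.mul_assoc, hE2, Matrix.one_mul, Matrix.mul_assoc,
      hE2, Matrix.mul_one]
  have hform : tau M * Jmat n =
      (tau E)ᵀᵀ * (tau (diagonal fun i => (ν i : ℍ[ℝ])) * Jmat n) * (tau E)ᵀ := by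
    rw [hM, tau_mul, tau_mul, transpose_transpose, Matrix.mul_assoc _ (tau Eᴴ),
      tau_conjTranspose_mul_Jmat, Matrix.mul_assoc, Matrix.mul_assoc, Matrix.mul_assoc]
  have hsympl : (tau E)ᵀᵀ * Jmat n * (tau E)ᵀ = Jmat n := by
    rw [transpose_transpose, tau_mul_Jmat_mul_transpose_of_mul_conjTranspose_eq_one hE2]
  change twoForm (tau M * Jmat n) ^ n = _
  rw [hform, ← actE_twoForm, ← map_pow, tau_diagonal_ofReal_mul_Jmat, twoForm_fromBlocks_diagonal,
    sum_smul_ω_mul_ω_pow, map_smul, actE_Ωn_of_transpose_mul_Jmat_mul _ hsympl,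
    Finset.prod_mul_distrib]
  simp only [Finset.prod_const, Finset.card_univ, Fintype.card_fin, Complex.ofReal_prod]
  congr 1
  ring

/-- for a hyperhermitian 𝓜 diagonalized as 𝓔*𝓜𝓔 = diag(ν), the form
ω_𝓜 = Σ [τ(𝓜)J]_{AB} ω^A∧ω^B satisfies ω_𝓜^∧n = 2ⁿ·n!·(ν₀⋯ν_{n−1})·Ω_{2n}. -/
theorem stmt_9 {n : ℕ} (M : Matrix (Fin n) (Fin n) ℍ[ℝ]) (hM : Mᴴ = M)
    (E : Matrix (Fin n) (Fin n) ℍ[ℝ]) (hE1 : Eᴴ * E = 1) (hE2 : E * Eᴴ = 1)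
    (ν : Fin n → ℝ)
    (hdiag : Eᴴ * M * E = Matrix.diagonal (fun i => ((ν i : ℝ) : ℍ[ℝ]))) :
    (∑ A : Idx n, ∑ B : Idx n, (tau M * Jmat n) A B • (ω A * ω B)) ^ n =
      (((2 : ℂ) ^ n * (n.factorial : ℂ)) * (((∏ i, ν i : ℝ) : ℝ) : ℂ)) • Ωn n :=
  stmt_9_general M E hE2 ν hdiag

end
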